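/- arXiv:1508.03280 — 7 statements merged into one kernel-verified Lean document; each statement's English description precedes it below -/
import Mathlib

section
/- Let p be a polynomial of degree d over the complex numbers, let z_n be a point in the complex plane, and let z_{n+1} = z_n - p(z_n)/p'(z_n) be its Newton iterate (assuming p'(z_n) ≠ 0). If |z_n - z_{n+1}| < ε/d for some ε > 0, then there exists a root z of p with |z_n - z| < ε. -/
open Polynomial

/-!
Since `p' / p = ∑ 1 / (z - r)` over the roots `r` of `p` counted with multiplicity, if every root
lies at distance at least `ε` from `z` then `‖p'(z) / p(z)‖ ≤ d / ε`, i.e. the Newton step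
`p(z) / p'(z)` has norm at least `ε / d`.
-/

theorem Polynomial.Splits.norm_eval_derivative_div_eval_le {K : Type*} [NormedField K]
    {f : K[X]} (hf : f.Splits) {x : K} (hx : f.eval x ≠ 0) {δ : ℝ} (hδ : 0 < δ)
    (hroots : ∀ r ∈ f.roots, δ ≤ ‖x - r‖) :
    ‖f.derivative.eval x / f.eval x‖ ≤ f.natDegree / δ := by
  rw [hf.eval_derivative_div_eval_of_ne_zero hx]
  calc ‖(f.roots.map fun r ↦ 1 / (x - r)).sum‖
      ≤ (f.roots.map fun r ↦ ‖1 / (x - r)‖).sum := by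
        simpa only [Multiset.map_map, Function.comp_def] using norm_multiset_sum_le (f.roots.map fun r ↦ 1 / (x - r))
    _ ≤ (f.roots.map fun _ ↦ 1 / δ).sum := by
        refine Multiset.sum_map_le_sum_map _ _ fun r hr ↦ ?_
        rw [norm_div, norm_one]
        exact one_div_le_one_div_of_le hδ (hroots r hr)
    _ = f.natDegree / δ := by
        simp [splits_iff_card_roots.mp hf, div_eq_mul_inv]

theorem Polynomial.exists_root_norm_sub_lt_of_norm_div_derivative_lt {K : Type*} [NormedField K]
    [IsAlgClosed K] {p : K[X]} {z : K} (hz : p.derivative.eval z ≠ 0) {ε : ℝ}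
    (h : ‖p.eval z / p.derivative.eval z‖ < ε / p.natDegree) :
    ∃ w, p.eval w = 0 ∧ ‖z - w‖ < ε := by
  have hε : 0 < ε := by
    rcases div_pos_iff.mp ((norm_nonneg _).trans_lt h) with ⟨hε, -⟩ | ⟨-, hd⟩
    · exact hε
    · exact absurd hd (Nat.cast_nonneg _).not_gt
  by_contra! hfar
  have hpz : p.eval z ≠ 0 := fun h0 ↦ by simpa [hε.not_ge] using hfar z h0
  have hlog := (IsAlgClosed.splits p).norm_eval_derivative_div_eval_le hpz hε
    fun r hr ↦ hfar r (isRoot_of_mem_roots hr)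
  have hstep : ε / p.natDegree ≤ ‖p.eval z / p.derivative.eval z‖ :=
    calc ε / p.natDegree = (p.natDegree / ε)⁻¹ := (inv_div _ _).symm
      _ ≤ ‖p.derivative.eval z / p.eval z‖⁻¹ :=
        inv_anti₀ (norm_pos_iff.mpr (div_ne_zero hz hpz)) hlog
      _ = ‖p.eval z / p.derivative.eval z‖ := by rw [← norm_inv, inv_div]
  exact hstep.not_gt h

theorem stmt_0_general (p : Polynomial ℂ) (d : ℕ) (hdeg : p.natDegree = d)
    (ε : ℝ) (z : ℂ) (hz : p.derivative.eval z ≠ 0)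
    (h : ‖z - (z - p.eval z / p.derivative.eval z)‖ < ε / d) :
    ∃ w : ℂ, p.eval w = 0 ∧ ‖z - w‖ < ε := by
  rw [sub_sub_cancel, ← hdeg] at h
  exact exists_root_norm_sub_lt_of_norm_div_derivative_lt hz h

/-- If the Newton step at `z` is smaller than `ε / d` for a polynomial `p`
of degree `d ≥ 1`, then there is a root of `p` within distance `ε` of `z`. -/
theorem stmt_0 (p : Polynomial ℂ) (d : ℕ) (hdeg : p.natDegree = d) (hd : 1 ≤ d)
    (ε : ℝ) (hε : 0 < ε) (z : ℂ) (hz : p.derivative.eval z ≠ 0)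
    (h : ‖z - (z - p.eval z / p.derivative.eval z)‖ < ε / d) :
    ∃ w : ℂ, p.eval w = 0 ∧ ‖z - w‖ < ε :=
  stmt_0_general p d hdeg ε z hz h
end

section
/- Let K_n be a sequence of bounded operators on a Hilbert space H such that the family {K_n} is collectively compact (i.e., the set {K_n x : n ∈ ℕ, ‖x‖ ≤ 1} has compact closure) and the adjoints K_n* converge strongly to 0. Then ‖K_n‖ → 0 in operator norm. -/
/-!
By Banach–Steinhaus the adjoints `K n†` are uniformly bounded, hence equicontinuous, so their
strong convergence to `0` is uniform on the compact closure `C` of `⋃ n, K n '' closedBall 0 1`.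
Since `‖K n‖ ^ 2 = ‖K n† ∘L K n‖` and `K n` maps the unit ball into `C`, we get
`‖K n‖ ^ 2 ≤ sup_{z ∈ C} ‖K n† z‖ → 0`.
-/

open Filter Topology

namespace ContinuousLinearMap

section UniformBoundedness

variable {𝕜 𝕜₂ E F : Type*} [NontriviallyNormedField 𝕜] [NontriviallyNormedField 𝕜₂]
  {σ : 𝕜 →+* 𝕜₂} [RingHomIsometric σ] [SeminormedAddCommGroup E] [SeminormedAddCommGroup F]
  [NormedSpace 𝕜 E] [NormedSpace 𝕜₂ F]

theorem bddAbove_range_opNorm_of_tendsto [CompleteSpace E] {A : ℕ → E →SL[σ] F} {f : E → F}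
    (h : ∀ x, Tendsto (fun n => A n x) atTop (𝓝 (f x))) :
    BddAbove (Set.range fun n => ‖A n‖) := by
  obtain ⟨C, hC⟩ := banach_steinhaus fun x =>
    let ⟨C, hC⟩ := (h x).norm.bddAbove_range
    ⟨C, fun n => hC ⟨n, rfl⟩⟩
  exact ⟨C, Set.forall_mem_range.2 hC⟩

theorem tendstoUniformlyOn_of_bddAbove_of_tendsto {ι : Type*} {l : Filter ι}
    {A : ι → E →SL[σ] F} (hA : BddAbove (Set.range fun i => ‖A i‖)) {f : E → F}
    (h : ∀ x, Tendsto (fun i => A i x) l (𝓝 (f x))) {C : Set E} (hC : IsCompact C) :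
    TendstoUniformlyOn (fun i => ⇑(A i)) f l C := by
  have hequi : Equicontinuous ((↑) ∘ A) := ((NormedSpace.equicontinuous_TFAE A).out 1 7).2 hA
  have hunif := (EquicontinuousOn.tendsto_uniformOnFun_iff_pi' (𝔖 := {C}) (by simpa using hC)
    (fun _ _ => hequi.equicontinuousOn _) l f).2
    (tendsto_pi_nhds.2 fun x => h x)
  exact UniformOnFun.tendsto_iff_tendstoUniformlyOn.1 hunif C rfl

end UniformBoundedness

variable {𝕜 E F : Type*} [RCLike 𝕜] [NormedAddCommGroup E] [NormedAddCommGroup F]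
  [InnerProductSpace 𝕜 E] [InnerProductSpace 𝕜 F] [CompleteSpace E] [CompleteSpace F]

theorem opNorm_sq_le_of_adjoint_comp_le (T : E →L[𝕜] F) {η : ℝ} (hη : 0 ≤ η)
    (h : ∀ x, ‖x‖ ≤ 1 → ‖adjoint T (T x)‖ ≤ η) : ‖T‖ ^ 2 ≤ η := by
  rw [sq, ← norm_adjoint_comp_self]
  exact opNorm_le_of_unit_norm hη fun x hx => h x hx.le

end ContinuousLinearMap

open ContinuousLinearMap in
/-- If the family `{K_n}` of bounded operators on a Hilbert space `H` is
collectively compact (the set `{K_n x : n ∈ ℕ, ‖x‖ ≤ 1}` has compact closure) and the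
adjoints `K_n*` converge strongly to `0`, then `‖K_n‖ → 0` in operator norm. -/
theorem stmt_2 {H : Type*} [NormedAddCommGroup H] [InnerProductSpace ℂ H] [CompleteSpace H]
    (K : ℕ → H →L[ℂ] H)
    (hcc : IsCompact (closure {y : H | ∃ n : ℕ, ∃ x : H, ‖x‖ ≤ 1 ∧ y = K n x}))
    (hadj : ∀ x : H,
      Tendsto (fun n => ContinuousLinearMap.adjoint (K n) x) atTop (𝓝 (0 : H))) :
    Tendsto (fun n => ‖K n‖) atTop (𝓝 (0 : ℝ)) := by
  have hunif : TendstoUniformlyOn (fun n => ⇑(adjoint (K n))) 0 atTop _ :=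
    tendstoUniformlyOn_of_bddAbove_of_tendsto (bddAbove_range_opNorm_of_tendsto hadj) hadj hcc
  have hsq : Tendsto (fun n => ‖K n‖ ^ 2) atTop (𝓝 0) := by
    refine Metric.tendsto_nhds.2 fun ε hε => ?_
    filter_upwards [Metric.tendstoUniformlyOn_iff.1 hunif (ε / 2) (half_pos hε)] with n hn
    have hle : ‖K n‖ ^ 2 ≤ ε / 2 := (K n).opNorm_sq_le_of_adjoint_comp_le (half_pos hε).le
      fun x hx => by simpa using (hn _ (subset_closure ⟨n, x, hx, rfl⟩)).le
    rw [Real.dist_0_eq_abs, abs_of_nonneg (by positivity)]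
    linarith
  simpa using hsq.sqrt
end

section
/- Let A be a closed densely defined operator on a Hilbert space H such that R(z₀) = (A - z₀)⁻¹ exists and is compact at some z₀ ∈ ℂ. Let R_n(z₀) be bounded operators with ‖R_n(z₀) - R(z₀)‖ → 0. Then for any compact set K ⊂ ℂ and r > 0, setting K_r = K \ ⋃_j U_r(λ_j) (removing open discs of radius r around all spectrum points λ_j of A), for all sufficiently large n the operators R_n(z) := R_n(z₀)(I - (z - z₀)R_n(z₀))⁻¹ exist for all z ∈ K_r and sup_{z ∈ K_r} ‖R_n(z) - R(z)‖ → 0 as n → ∞, where R(z) = R(z₀)(I - (z - z₀)R(z₀))⁻¹. -/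
open Filter Topology

/-! The map `(T, z) ↦ T (1 - (z - z₀) T)⁻¹` is jointly continuous at every point `(R₀, z)`
where `1 - (z - z₀) R₀` is invertible, because inversion is continuous at units and the units
form an open set. On the compact set `K_r`, which avoids the spectrum, pointwise joint
continuity at the fibre over `R₀` upgrades to uniform convergence as `T → R₀`, and the
invertibility of `1 - (z - z₀) T` likewise holds uniformly on `K_r` for `T` near `R₀`. -/

theorem IsCompact.tendstoUniformlyOn_of_continuousAt {X Y E : Type*} [TopologicalSpace X]
    [TopologicalSpace Y] [UniformSpace E] {f : X → Y → E} {x₀ : X} {K : Set Y}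
    (hK : IsCompact K) (hf : ∀ y ∈ K, ContinuousAt ↿f (x₀, y)) :
    TendstoUniformlyOn f (f x₀) (𝓝 x₀) K := by
  intro u hu
  obtain ⟨v, hv, hv_symm, hvu⟩ := comp_symm_mem_uniformity_sets hu
  refine hK.eventually_forall_of_forall_eventually fun y hy => ?_
  have hnear : ∀ᶠ p : X × Y in 𝓝 (x₀, y), (f x₀ y, f p.1 p.2) ∈ v :=
    hf y hy (mem_nhds_left _ hv)
  have hsnd : Tendsto (fun p : X × Y => (x₀, p.2)) (𝓝 (x₀, y)) (𝓝 (x₀, y)) :=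
    (continuous_const.prodMk continuous_snd).continuousAt
  have hfibre : ∀ᶠ p : X × Y in 𝓝 (x₀, y), (f x₀ y, f x₀ p.2) ∈ v :=
    (hf y hy).tendsto.comp hsnd (mem_nhds_left _ hv)
  filter_upwards [hnear, hfibre] with p h₁ h₂
  exact hvu (SetRel.prodMk_mem_comp (SetRel.symm v h₂) h₁)

section Resolvent

variable {𝕜 R : Type*} [NormedField 𝕜] [NormedRing R] [NormedAlgebra 𝕜 R]

/-- The resolvent at `z` of an operator whose resolvent at `z₀` is `T`. -/
noncomputable def resolventFrom (z₀ : 𝕜) (T : R) (z : 𝕜) : R :=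
  T * Ring.inverse (1 - (z - z₀) • T)

theorem continuous_one_sub_smul (z₀ : 𝕜) :
    Continuous fun p : R × 𝕜 => 1 - (p.2 - z₀) • p.1 := by
  fun_prop

variable [CompleteSpace R]

theorem continuousAt_resolventFrom {z₀ z : 𝕜} {T : R} (h : IsUnit (1 - (z - z₀) • T)) :
    ContinuousAt ↿(resolventFrom z₀ : R → 𝕜 → R) (T, z) :=
  continuous_fst.continuousAt.mul <|
    (NormedRing.inverse_continuousAt h.unit).comp_of_eq
      (continuous_one_sub_smul (R := R) z₀).continuousAt h.unit_spec.symm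

variable {z₀ : 𝕜} {T : R} {K : Set 𝕜}

theorem eventually_forall_isUnit_one_sub_smul (hK : IsCompact K)
    (h : ∀ z ∈ K, IsUnit (1 - (z - z₀) • T)) :
    ∀ᶠ T' in 𝓝 T, ∀ z ∈ K, IsUnit (1 - (z - z₀) • T') :=
  hK.eventually_forall_of_forall_eventually fun z hz =>
    (continuous_one_sub_smul z₀).continuousAt.eventually
      ((Units.isOpen (R := R)).eventually_mem (h z hz))

theorem tendstoUniformlyOn_resolventFrom (hK : IsCompact K)
    (h : ∀ z ∈ K, IsUnit (1 - (z - z₀) • T)) :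
    TendstoUniformlyOn (resolventFrom z₀) (resolventFrom z₀ T) (𝓝 T) K :=
  hK.tendstoUniformlyOn_of_continuousAt fun z hz => continuousAt_resolventFrom (h z hz)

end Resolvent

theorem stmt_3_general {H : Type*} [NormedAddCommGroup H] [InnerProductSpace ℂ H] [CompleteSpace H]
    (spA : Set ℂ) (z₀ : ℂ) (R₀ : H →L[ℂ] H)
    (hsp : ∀ z : ℂ, z ∉ spA ↔ IsUnit (1 - (z - z₀) • R₀))
    (Rn : ℕ → H →L[ℂ] H)
    (hRn : Tendsto (fun n => ‖Rn n - R₀‖) atTop (𝓝 (0 : ℝ)))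
    (K : Set ℂ) (hK : IsCompact K) (r : ℝ) (hr : 0 < r) :
    ∀ ε : ℝ, 0 < ε → ∃ N : ℕ, ∀ n ≥ N,
      ∀ z ∈ (K \ ⋃ μ ∈ spA, Metric.ball μ r),
        IsUnit (1 - (z - z₀) • Rn n) ∧
        ‖Rn n * Ring.inverse (1 - (z - z₀) • Rn n)
            - R₀ * Ring.inverse (1 - (z - z₀) • R₀)‖ < ε := by
  intro ε hε
  set S := K \ ⋃ μ ∈ spA, Metric.ball μ r
  have hS : IsCompact S := hK.diff (isOpen_biUnion fun μ _ => Metric.isOpen_ball)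
  have hunit : ∀ z ∈ S, IsUnit (1 - (z - z₀) • R₀) := fun z hz =>
    (hsp z).mp fun hzsp => hz.2 (Set.mem_biUnion hzsp (Metric.mem_ball_self hr))
  have hlim : Tendsto Rn atTop (𝓝 R₀) := tendsto_iff_norm_sub_tendsto_zero.mpr hRn
  have hclose := Metric.tendstoUniformlyOn_iff.mp (tendstoUniformlyOn_resolventFrom hS hunit) ε hε
  obtain ⟨N, hN⟩ := eventually_atTop.mp <|
    hlim.eventually (eventually_forall_isUnit_one_sub_smul hS hunit) |>.and (hlim.eventually hclose)
  refine ⟨N, fun n hn z hz => ⟨(hN n hn).1 z hz, ?_⟩⟩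
  rw [← dist_eq_norm, dist_comm]
  exact (hN n hn).2 z hz

/-- Resolvent convergence away from the spectrum.  The (possibly unbounded)
closed densely defined operator `A` is encoded through its compact resolvent
`R₀ = (A - z₀)⁻¹` at a point `z₀`; its spectrum `spA` is exactly the set of points `z`
where `1 - (z - z₀)R₀` fails to be invertible, and for `z ∉ spA` the resolvent is
`R(z) = R₀ (1 - (z - z₀)R₀)⁻¹`.  If `‖R_n(z₀) - R(z₀)‖ → 0` then, for every compact
`K ⊂ ℂ` and `r > 0`, on `K_r = K \ ⋃_{μ ∈ spA} B(μ, r)` the approximate resolvents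
`R_n(z) = R_n(z₀)(1 - (z - z₀)R_n(z₀))⁻¹` exist for all large `n` and converge to `R(z)`
uniformly on `K_r`. -/
theorem stmt_3 {H : Type*} [NormedAddCommGroup H] [InnerProductSpace ℂ H] [CompleteSpace H]
    (spA : Set ℂ) (z₀ : ℂ) (R₀ : H →L[ℂ] H)
    (hcomp : IsCompactOperator ⇑R₀)
    (hsp : ∀ z : ℂ, z ∉ spA ↔ IsUnit (1 - (z - z₀) • R₀))
    (Rn : ℕ → H →L[ℂ] H)
    (hRn : Tendsto (fun n => ‖Rn n - R₀‖) atTop (𝓝 (0 : ℝ)))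
    (K : Set ℂ) (hK : IsCompact K) (r : ℝ) (hr : 0 < r) :
    ∀ ε : ℝ, 0 < ε → ∃ N : ℕ, ∀ n ≥ N,
      ∀ z ∈ (K \ ⋃ μ ∈ spA, Metric.ball μ r),
        IsUnit (1 - (z - z₀) • Rn n) ∧
        ‖Rn n * Ring.inverse (1 - (z - z₀) • Rn n)
            - R₀ * Ring.inverse (1 - (z - z₀) • R₀)‖ < ε :=
  stmt_3_general spA z₀ R₀ hsp Rn hRn K hK r hr
end

section
/- Let φ_n and φ be continuous nonnegative functions on ℂ that have local minima only where they vanish, are not constant on any open set, and such that φ_n → φ uniformly on compact sets. Define S = {z : φ(z) ≤ 1} and S_n = {z : φ_n(z) ≤ 1}. Then for every compact set K ⊂ ℂ and every δ > 0: (i) S ∩ K ⊆ N_δ(S_n) for all sufficiently large n, and (ii) S_n ∩ K ⊆ N_δ(S) for all sufficiently large n. -/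
open Filter Topology

/-!
Where `φ = 1`, `φ` has no local minimum, so every point of `{φ ≤ 1}` is a limit of points
with `φ < 1`; by compactness finitely many such points lie `δ`-close to all of
`{φ ≤ 1} ∩ K`, and pointwise convergence keeps them in `{φₙ ≤ 1}` for large `n`.
Conversely, on the compact set `K \ N_δ({φ ≤ 1})` the continuous function `φ` is bounded
below by some `1 + ε`, so uniform convergence on `K` forces `φₙ > 1` there for large `n`.
-/

theorem setOf_le_subset_closure_setOf_lt {X : Type*} [TopologicalSpace X] {f : X → ℝ} {c : ℝ}
    (h : ∀ z, IsLocalMin f z → f z < c) : {z | f z ≤ c} ⊆ closure {z | f z < c} := by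
  intro z (hz : f z ≤ c)
  rcases hz.lt_or_eq with hlt | heq
  · exact subset_closure hlt
  · have hnot : ¬ IsLocalMin f z := fun hz => (h z hz).ne heq
    rw [mem_closure_iff_frequently]
    change ∃ᶠ w in 𝓝 z, f w < c
    simpa only [IsLocalMin, IsMinFilter, not_eventually, not_le, heq] using hnot

theorem eventually_subset_thickening_of_subset_closure {ι X : Type*} [PseudoMetricSpace X]
    {l : Filter ι} {D U : Set X} {V : ι → Set X} (hD : IsCompact D) (hDU : D ⊆ closure U)
    (hV : ∀ w ∈ U, ∀ᶠ i in l, w ∈ V i) {δ : ℝ} (hδ : 0 < δ) :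
    ∀ᶠ i in l, D ⊆ Metric.thickening δ (V i) := by
  have hcover : D ⊆ ⋃ w ∈ U, Metric.ball w δ := by
    rw [← Metric.thickening_eq_biUnion_ball]
    exact hDU.trans (Metric.closure_subset_thickening hδ U)
  obtain ⟨t, htU, htfin, hDt⟩ :=
    hD.elim_finite_subcover_image (fun _ _ => Metric.isOpen_ball) hcover
  filter_upwards [(htfin.eventually_all).2 fun w hw => hV w (htU hw)] with i hi
  refine hDt.trans (Set.iUnion₂_subset fun w hw => ?_)
  rw [Metric.thickening_eq_biUnion_ball]
  exact Set.subset_biUnion_of_mem (u := fun x => Metric.ball x δ) (hi w hw)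

theorem TendstoUniformlyOn.eventually_setOf_le_inter_subset {ι X : Type*} [TopologicalSpace X]
    {l : Filter ι} {F : ι → X → ℝ} {f : X → ℝ} {K W : Set X} {c : ℝ}
    (hF : TendstoUniformlyOn F f l K) (hK : IsCompact K) (hf : ContinuousOn f K)
    (hW : IsOpen W) (hfW : {x | f x ≤ c} ⊆ W) :
    ∀ᶠ i in l, {x | F i x ≤ c} ∩ K ⊆ W := by
  have hgt : ∀ x ∈ K \ W, c < f x := fun x hx => not_le.1 fun hle => hx.2 (hfW hle)
  obtain ⟨c', hcc', hc'⟩ := (hK.diff hW).exists_forall_le' (hf.mono Set.sdiff_subset) hgt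
  filter_upwards [Metric.tendstoUniformlyOn_iff.1 hF (c' - c) (sub_pos.2 hcc')]
    with i hi x ⟨hFx, hxK⟩
  by_contra hxW
  have hclose := (abs_lt.1 (Real.dist_eq _ _ ▸ hi x hxK)).2
  have hfx := hc' x ⟨hxK, hxW⟩
  change F i x ≤ c at hFx
  linarith

theorem stmt_4_general (φ : ℂ → ℝ) (φn : ℕ → ℂ → ℝ)
    (hφc : Continuous φ)
    (hmin : ∀ z, IsLocalMin φ z → φ z = 0)
    (hconv : ∀ K : Set ℂ, IsCompact K → TendstoUniformlyOn φn φ atTop K)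
    (K : Set ℂ) (hK : IsCompact K) (δ : ℝ) (hδ : 0 < δ) :
    (∀ᶠ n in atTop, {z : ℂ | φ z ≤ 1} ∩ K ⊆ Metric.thickening δ {z : ℂ | φn n z ≤ 1}) ∧
    (∀ᶠ n in atTop, {z : ℂ | φn n z ≤ 1} ∩ K ⊆ Metric.thickening δ {z : ℂ | φ z ≤ 1}) := by
  have hlt : ∀ z, IsLocalMin φ z → φ z < 1 := fun z hz => (hmin z hz).trans_lt one_pos
  refine ⟨eventually_subset_thickening_of_subset_closure
      (hK.inter_left (isClosed_le hφc continuous_const))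
      (Set.inter_subset_left.trans (setOf_le_subset_closure_setOf_lt hlt)) (fun w hw => ?_) hδ,
    (hconv K hK).eventually_setOf_le_inter_subset hK hφc.continuousOn Metric.isOpen_thickening
      (Metric.self_subset_thickening hδ _)⟩
  exact ((hconv {w} isCompact_singleton).tendsto_at rfl).eventually_le_const hw

/-- Let `φ_n` and `φ` be continuous nonnegative functions on `ℂ` having local
minima only where they vanish, not constant on any nonempty open set, with `φ_n → φ`
uniformly on compact sets.  With `S = {φ ≤ 1}` and `S_n = {φ_n ≤ 1}`, for every compact
`K` and `δ > 0`: eventually `S ∩ K ⊆ N_δ(S_n)` and eventually `S_n ∩ K ⊆ N_δ(S)`. -/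
theorem stmt_4 (φ : ℂ → ℝ) (φn : ℕ → ℂ → ℝ)
    (hφc : Continuous φ) (hφnc : ∀ n, Continuous (φn n))
    (hφ0 : ∀ z, 0 ≤ φ z) (hφn0 : ∀ n z, 0 ≤ φn n z)
    (hmin : ∀ z, IsLocalMin φ z → φ z = 0)
    (hminn : ∀ n z, IsLocalMin (φn n) z → φn n z = 0)
    (hnc : ∀ U : Set ℂ, IsOpen U → U.Nonempty → ¬ ∃ c : ℝ, ∀ z ∈ U, φ z = c)
    (hncn : ∀ n, ∀ U : Set ℂ, IsOpen U → U.Nonempty → ¬ ∃ c : ℝ, ∀ z ∈ U, φn n z = c)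
    (hconv : ∀ K : Set ℂ, IsCompact K → TendstoUniformlyOn φn φ atTop K)
    (K : Set ℂ) (hK : IsCompact K) (δ : ℝ) (hδ : 0 < δ) :
    (∀ᶠ n in atTop, {z : ℂ | φ z ≤ 1} ∩ K ⊆ Metric.thickening δ {z : ℂ | φn n z ≤ 1}) ∧
    (∀ᶠ n in atTop, {z : ℂ | φn n z ≤ 1} ∩ K ⊆ Metric.thickening δ {z : ℂ | φ z ≤ 1}) :=
  stmt_4_general φ φn hφc hmin hconv K hK δ hδ
end

section
/- Let A be a bounded self-adjoint operator on ℓ²(ℕ), let P_m be the orthogonal projection onto the span of the first m canonical basis vectors, and define γ(z) = ‖(A - zI)⁻¹‖⁻¹ (with the convention γ(z) = 0 if z is in the spectrum) and γ_m(z) = min{σ₁((A - zI)P_m|_{Ran P_m}), σ₁((A* - z̄I)P_m|_{Ran P_m})} where σ₁ denotes the smallest singular value (injection modulus). Then γ_m converges to γ pointwise monotonically from above, and hence uniformly on every compact subset of ℂ. -/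
/-! For self-adjoint `A` the operator `B = A - z` is normal, so `‖B* ξ‖ = ‖B ξ‖` and the two
injection moduli in `γ_m(z)` coincide: `γ_m(z)` is the infimum of `‖B ξ‖` over unit vectors of
`Ran P_m`. These ranges increase with `m` and their union is dense, so `γ_m(z)` decreases to the
infimum over all unit vectors. For a normal operator that infimum is `‖B⁻¹‖⁻¹`: if it is positive,
`B` is bounded below, so its range is closed, and dense because its orthogonal complement is
`ker B* = ker B = 0`. Every `γ_m` and `γ` is 1-Lipschitz in `z`, and Dini's theorem upgrades the
monotone pointwise convergence to uniform convergence on compact sets. -/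

open Filter Topology

noncomputable section

/-- `ℓ²(ℕ)` over `ℂ`. -/
abbrev L2 : Type := lp (fun _ : ℕ => ℂ) 2

/-- The canonical orthonormal basis vectors of `ℓ²(ℕ)`. -/
def eVec (i : ℕ) : L2 := lp.single 2 i 1

/-- `Ran P_m`: the span of the first `m` canonical basis vectors. -/
def spanE (m : ℕ) : Submodule ℂ L2 := Submodule.span ℂ (eVec '' Set.Iio m)

/-- The injection modulus (smallest singular value) of `B` restricted to the subspace `E`:
`σ₁(B|_E) = inf {‖Bξ‖ : ξ ∈ E, ‖ξ‖ = 1}`. -/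
def sigma1On (B : L2 →L[ℂ] L2) (E : Submodule ℂ L2) : ℝ :=
  sInf {r : ℝ | ∃ ξ ∈ E, ‖ξ‖ = 1 ∧ r = ‖B ξ‖}

/-- `γ_m(z) = min{σ₁((A - z)P_m|_{Ran P_m}), σ₁((A* - z̄)P_m|_{Ran P_m})}`. -/
def gammaM (A : L2 →L[ℂ] L2) (m : ℕ) (z : ℂ) : ℝ :=
  min (sigma1On (A - z • 1) (spanE m))
      (sigma1On (ContinuousLinearMap.adjoint A - (starRingEnd ℂ z) • 1) (spanE m))

/-- `γ(z) = ‖(A - z)⁻¹‖⁻¹`, with the convention `γ(z) = 0` when `A - z` is not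
boundedly invertible (`Ring.inverse` is `0` on non-units, and `0⁻¹ = 0` in `ℝ`). -/
def gammaRes (A : L2 →L[ℂ] L2) (z : ℂ) : ℝ := ‖Ring.inverse (A - z • 1)‖⁻¹

open scoped NNReal

lemma exists_norm_eq_one (𝕜 : Type*) {E : Type*} [RCLike 𝕜] [NormedAddCommGroup E]
    [NormedSpace 𝕜 E] [Nontrivial E] : ∃ ξ : E, ‖ξ‖ = 1 :=
  let ⟨_, hx⟩ := exists_ne (0 : E)
  ⟨_, norm_smul_inv_norm (𝕜 := 𝕜) hx⟩

lemma LipschitzWith.ciInf {ι α : Type*} [PseudoMetricSpace α] {f : ι → α → ℝ} {K : ℝ≥0}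
    (hf : ∀ i, LipschitzWith K (f i)) (hbdd : ∀ x, BddBelow (Set.range fun i => f i x)) :
    LipschitzWith K fun x => ⨅ i, f i x := by
  rcases isEmpty_or_nonempty ι with hι | hι
  · simpa only [Real.iInf_of_isEmpty] using LipschitzWith.const' (α := α) (0 : ℝ)
  refine LipschitzWith.of_le_add_mul K fun x y => sub_le_iff_le_add.1 ?_
  exact le_ciInf fun i =>
    sub_le_iff_le_add.2 ((ciInf_le (hbdd x) i).trans ((hf i).le_add_mul x y))

section InjectionModulus

variable {𝕜 E F : Type*} [RCLike 𝕜] [NormedAddCommGroup E] [NormedSpace 𝕜 E]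
  [NormedAddCommGroup F] [NormedSpace 𝕜 F]

-- The infimum of the empty family is the junk value `0` when `S` contains no unit vector.
def injectionModulus (T : E →L[𝕜] F) (S : Submodule 𝕜 E) : ℝ :=
  ⨅ ξ : {ξ : E // ξ ∈ S ∧ ‖ξ‖ = 1}, ‖T ξ‖

lemma bddBelow_range_norm_apply (T : E →L[𝕜] F) (S : Submodule 𝕜 E) :
    BddBelow (Set.range fun ξ : {ξ : E // ξ ∈ S ∧ ‖ξ‖ = 1} => ‖T ξ‖) :=
  ⟨0, Set.forall_mem_range.2 fun _ => norm_nonneg _⟩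

lemma injectionModulus_le (T : E →L[𝕜] F) {S : Submodule 𝕜 E} {ξ : E} (hξS : ξ ∈ S)
    (hξ : ‖ξ‖ = 1) : injectionModulus T S ≤ ‖T ξ‖ :=
  ciInf_le (bddBelow_range_norm_apply T S) ⟨ξ, hξS, hξ⟩

lemma injectionModulus_mul_norm_le (T : E →L[𝕜] F) {S : Submodule 𝕜 E} {x : E} (hx : x ∈ S) :
    injectionModulus T S * ‖x‖ ≤ ‖T x‖ := by
  rcases eq_or_ne x 0 with rfl | hx0
  · simp
  have hunit := injectionModulus_le T (S.smul_mem ((‖x‖ : 𝕜)⁻¹) hx) (norm_smul_inv_norm hx0)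
  rw [map_smul, norm_smul, norm_inv, RCLike.norm_ofReal, abs_norm] at hunit
  rwa [← le_div_iff₀ (norm_pos_iff.2 hx0), div_eq_inv_mul]

lemma injectionModulus_anti (T : E →L[𝕜] F) {S S' : Submodule 𝕜 E} (hSS' : S ≤ S')
    (hS : ∃ ξ ∈ S, ‖ξ‖ = 1) : injectionModulus T S' ≤ injectionModulus T S := by
  obtain ⟨ξ, hξS, hξ⟩ := hS
  have : Nonempty {ξ : E // ξ ∈ S ∧ ‖ξ‖ = 1} := ⟨⟨ξ, hξS, hξ⟩⟩
  exact le_ciInf fun η => injectionModulus_le T (hSS' η.2.1) η.2.2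

lemma eventually_injectionModulus_lt [Nontrivial E] {ι : Type*} {l : Filter ι} (T : E →L[𝕜] F)
    {S : ι → Submodule 𝕜 E} (hS : ∀ x, ∃ u : ι → E, (∀ i, u i ∈ S i) ∧ Tendsto u l (𝓝 x))
    {c : ℝ} (hc : injectionModulus T ⊤ < c) : ∀ᶠ i in l, injectionModulus T (S i) < c := by
  obtain ⟨ξ₀, hξ₀⟩ := exists_norm_eq_one 𝕜 (E := E)
  have : Nonempty {ξ : E // ξ ∈ (⊤ : Submodule 𝕜 E) ∧ ‖ξ‖ = 1} := ⟨⟨ξ₀, trivial, hξ₀⟩⟩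
  obtain ⟨⟨ξ, _, hξ⟩, hTξ⟩ := exists_lt_of_ciInf_lt hc
  obtain ⟨u, huS, hu⟩ := hS ξ
  have hquot : Tendsto (fun i => ‖T (u i)‖ / ‖u i‖) l (𝓝 (‖T ξ‖ / ‖ξ‖)) :=
    ((T.continuous.tendsto ξ).comp hu).norm.div hu.norm (by simp [hξ])
  rw [hξ, div_one] at hquot
  filter_upwards [hquot.eventually (eventually_lt_nhds hTξ),
    hu.norm.eventually (eventually_gt_nhds (hξ ▸ one_pos))] with i hi hui
  calc injectionModulus T (S i) ≤ ‖T (u i)‖ / ‖u i‖ :=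
        (le_div_iff₀ hui).2 (injectionModulus_mul_norm_le T (huS i))
    _ < c := hi

lemma lipschitzWith_injectionModulus_sub_smul_one (T : E →L[𝕜] E) (S : Submodule 𝕜 E) :
    LipschitzWith 1 fun z : 𝕜 => injectionModulus (T - z • 1) S := by
  refine LipschitzWith.ciInf (fun ξ => LipschitzWith.of_le_add_mul 1 fun z w => ?_)
    fun z => bddBelow_range_norm_apply _ S
  have hsplit : (T - z • 1) ξ = (T - w • 1) ξ + (w - z) • (ξ : E) := by
    simp only [sub_apply, smul_apply, one_apply_eq_self, sub_smul]
    abel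
  calc ‖(T - z • 1) ξ‖ ≤ ‖(T - w • 1) ξ‖ + ‖w - z‖ * ‖(ξ : E)‖ := by
        rw [hsplit, ← norm_smul]; exact norm_add_le _ _
    _ = ‖(T - w • 1) ξ‖ + (1 : ℝ≥0) * dist z w := by
        rw [ξ.2.2, mul_one, NNReal.coe_one, one_mul, dist_comm, dist_eq_norm]

lemma norm_inverse_inv_mul_le (T : E →L[𝕜] E) (x : E) : ‖Ring.inverse T‖⁻¹ * ‖x‖ ≤ ‖T x‖ := by
  by_cases hT : IsUnit T
  · have hx : ‖x‖ ≤ ‖Ring.inverse T‖ * ‖T x‖ := by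
      calc ‖x‖ = ‖Ring.inverse T (T x)‖ := by
            rw [← mul_apply_eq_comp, Ring.inverse_mul_cancel T hT, one_apply_eq_self]
        _ ≤ ‖Ring.inverse T‖ * ‖T x‖ := (Ring.inverse T).le_opNorm (T x)
    calc ‖Ring.inverse T‖⁻¹ * ‖x‖ ≤ ‖Ring.inverse T‖⁻¹ * ‖Ring.inverse T‖ * ‖T x‖ := by
          rw [mul_assoc]; gcongr
      _ ≤ ‖T x‖ := mul_le_of_le_one_left (norm_nonneg _) (inv_mul_le_one_of_le₀ le_rfl
          (norm_nonneg _))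
  · simp [Ring.inverse_non_unit T hT]

lemma norm_inverse_inv_le_injectionModulus (T : E →L[𝕜] E) {S : Submodule 𝕜 E}
    (hS : ∃ ξ ∈ S, ‖ξ‖ = 1) : ‖Ring.inverse T‖⁻¹ ≤ injectionModulus T S := by
  obtain ⟨ξ, hξS, hξ⟩ := hS
  have : Nonempty {ξ : E // ξ ∈ S ∧ ‖ξ‖ = 1} := ⟨⟨ξ, hξS, hξ⟩⟩
  refine le_ciInf fun η => ?_
  simpa [η.2.2] using norm_inverse_inv_mul_le T (η : E)

end InjectionModulus

section Normal

variable {𝕜 H : Type*} [RCLike 𝕜] [NormedAddCommGroup H] [InnerProductSpace 𝕜 H] [CompleteSpace H]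

open ContinuousLinearMap

-- The range is closed by the bound, and dense since its orthogonal complement is `ker T = ⊥`.
lemma IsStarNormal.isUnit_of_bound {T : H →L[𝕜] H} (hT : IsStarNormal T) {c : ℝ} (hc : 0 < c)
    (h : ∀ x, c * ‖x‖ ≤ ‖T x‖) : IsUnit T := by
  have hker : T.ker = ⊥ := by
    refine (LinearMap.ker_eq_bot').2 fun x hx => norm_le_zero_iff.1 ?_
    have := h x
    rw [show T x = 0 from hx, norm_zero] at this
    nlinarith [norm_nonneg x]
  rw [isUnit_iff_bijective, bijective_iff_dense_range_and_antilipschitz]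
  refine ⟨?_, c.toNNReal⁻¹, T.antilipschitz_of_bound fun x => ?_⟩
  · rw [Submodule.topologicalClosure_eq_top_iff, hT.orthogonal_range, hker]
  · rw [NNReal.coe_inv, Real.coe_toNNReal _ hc.le, inv_mul_eq_div, le_div_iff₀ hc, mul_comm]
    exact h x

lemma IsStarNormal.injectionModulus_top [Nontrivial H] {T : H →L[𝕜] H} (hT : IsStarNormal T) :
    injectionModulus T ⊤ = ‖Ring.inverse T‖⁻¹ := by
  obtain ⟨ξ, hξ⟩ := exists_norm_eq_one 𝕜 (E := H)
  refine le_antisymm ?_ (norm_inverse_inv_le_injectionModulus T ⟨ξ, trivial, hξ⟩)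
  set s := injectionModulus T ⊤
  rcases le_or_gt s 0 with hs | hs
  · exact hs.trans (by positivity)
  have hbound : ∀ x, s * ‖x‖ ≤ ‖T x‖ := fun x => injectionModulus_mul_norm_le T trivial
  have hT : IsUnit T := hT.isUnit_of_bound hs hbound
  have hinv : ‖Ring.inverse T‖ ≤ s⁻¹ := by
    refine opNorm_le_bound _ (by positivity) fun y => ?_
    rw [inv_mul_eq_div, le_div_iff₀ hs, mul_comm]
    simpa [← mul_apply_eq_comp, Ring.mul_inverse_cancel T hT] using hbound (Ring.inverse T y)
  have hinv_pos : 0 < ‖Ring.inverse T‖ :=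
    norm_pos_iff.2 (Ring.inverse_unit hT.unit ▸ hT.unit⁻¹.ne_zero)
  calc s = s⁻¹⁻¹ := (inv_inv s).symm
    _ ≤ ‖Ring.inverse T‖⁻¹ := inv_anti₀ hinv_pos hinv

lemma IsStarNormal.injectionModulus_adjoint {T : H →L[𝕜] H} (hT : IsStarNormal T)
    (S : Submodule 𝕜 H) : injectionModulus (adjoint T) S = injectionModulus T S := by
  simp only [injectionModulus, ← isStarNormal_iff_norm_eq_adjoint.1 hT]

end Normal

lemma IsSelfAdjoint.isStarNormal_sub_smul_one {R A : Type*} [CommSemiring R] [StarRing R]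
    [Ring A] [StarRing A] [Algebra R A] [StarModule R A] {a : A} (ha : IsSelfAdjoint a) (r : R) :
    IsStarNormal (a - r • 1) := by
  have := ha.isStarNormal
  refine Commute.isStarNormal_sub ?_
  rw [star_smul, star_one]
  exact (Commute.one_right a).smul_right _

section SequenceSpace

lemma norm_eVec (i : ℕ) : ‖eVec i‖ = 1 := by
  simp [eVec]

instance : Nontrivial L2 := nontrivial_of_ne (eVec 0) 0 (norm_ne_zero_iff.1 (by simp [norm_eVec]))

lemma eVec_mem_spanE {i m : ℕ} (h : i < m) : eVec i ∈ spanE m :=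
  Submodule.subset_span ⟨i, h, rfl⟩

lemma spanE_mono : Monotone spanE :=
  fun _ _ hkl => Submodule.span_mono (Set.image_mono (Set.Iio_subset_Iio hkl))

lemma exists_tendsto_of_mem_spanE (x : L2) :
    ∃ u : ℕ → L2, (∀ m, u m ∈ spanE m) ∧ Tendsto u atTop (𝓝 x) := by
  refine ⟨fun m => ∑ i ∈ Finset.range m, x i • eVec i, fun m => ?_, ?_⟩
  · exact Submodule.sum_mem _ fun i hi =>
      Submodule.smul_mem _ _ (eVec_mem_spanE (Finset.mem_range.1 hi))
  · have hsingle : ∀ i, x i • eVec i = lp.single 2 i (x i) := fun i => by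
      rw [eVec, ← lp.single_smul, smul_eq_mul, mul_one]
    simp_rw [hsingle]
    exact (lp.hasSum_single (by norm_num) x).tendsto_sum_nat

lemma sigma1On_eq_injectionModulus (B : L2 →L[ℂ] L2) (E : Submodule ℂ L2) :
    sigma1On B E = injectionModulus B E := by
  rw [sigma1On, injectionModulus, iInf]
  congr 1
  ext r
  simp [eq_comm, and_assoc]

end SequenceSpace

section SelfAdjoint

variable {A : L2 →L[ℂ] L2}

open ContinuousLinearMap

lemma gammaM_eq_injectionModulus (hA : IsSelfAdjoint A) (m : ℕ) (z : ℂ) :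
    gammaM A m z = injectionModulus (A - z • 1) (spanE m) := by
  have hadj : adjoint A - starRingEnd ℂ z • 1 = adjoint (A - z • 1) := by
    rw [← star_eq_adjoint, ← star_eq_adjoint, star_sub, star_smul, star_one, Complex.star_def]
  rw [gammaM, hadj, sigma1On_eq_injectionModulus, sigma1On_eq_injectionModulus,
    (hA.isStarNormal_sub_smul_one z).injectionModulus_adjoint, min_self]

lemma gammaRes_eq_injectionModulus (hA : IsSelfAdjoint A) (z : ℂ) :
    gammaRes A z = injectionModulus (A - z • 1) ⊤ :=
  (hA.isStarNormal_sub_smul_one z).injectionModulus_top.symm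

lemma gammaM_le_gammaM_of_le (hA : IsSelfAdjoint A) {k l : ℕ} (hk : 1 ≤ k) (hkl : k ≤ l) (z : ℂ) :
    gammaM A l z ≤ gammaM A k z := by
  rw [gammaM_eq_injectionModulus hA, gammaM_eq_injectionModulus hA]
  exact injectionModulus_anti _ (spanE_mono hkl) ⟨eVec 0, eVec_mem_spanE hk, norm_eVec 0⟩

lemma gammaRes_le_gammaM (hA : IsSelfAdjoint A) {m : ℕ} (hm : 1 ≤ m) (z : ℂ) :
    gammaRes A z ≤ gammaM A m z := by
  rw [gammaM_eq_injectionModulus hA]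
  exact norm_inverse_inv_le_injectionModulus _ ⟨eVec 0, eVec_mem_spanE hm, norm_eVec 0⟩

lemma tendsto_gammaM (hA : IsSelfAdjoint A) (z : ℂ) :
    Tendsto (fun m => gammaM A m z) atTop (𝓝 (gammaRes A z)) := by
  refine tendsto_order.2 ⟨fun c hc => ?_, fun c hc => ?_⟩
  · filter_upwards [eventually_ge_atTop 1] with m hm
    exact hc.trans_le (gammaRes_le_gammaM hA hm z)
  · rw [gammaRes_eq_injectionModulus hA] at hc
    simpa only [gammaM_eq_injectionModulus hA] using
      eventually_injectionModulus_lt _ exists_tendsto_of_mem_spanE hc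

lemma continuous_gammaM (hA : IsSelfAdjoint A) (m : ℕ) : Continuous (gammaM A m) := by
  simpa only [← gammaM_eq_injectionModulus hA] using
    (lipschitzWith_injectionModulus_sub_smul_one A (spanE m)).continuous

lemma continuous_gammaRes (hA : IsSelfAdjoint A) : Continuous (gammaRes A) := by
  simpa only [← gammaRes_eq_injectionModulus hA] using
    (lipschitzWith_injectionModulus_sub_smul_one A ⊤).continuous

end SelfAdjoint

/-- For a bounded self-adjoint operator `A` on `ℓ²(ℕ)`, the functions `γ_m`
converge to `γ` pointwise monotonically from above, and hence uniformly on every compact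
subset of `ℂ`. -/
theorem stmt_6 (A : L2 →L[ℂ] L2) (hA : IsSelfAdjoint A) :
    (∀ z : ℂ, ∀ m : ℕ, 1 ≤ m → gammaM A (m + 1) z ≤ gammaM A m z) ∧
    (∀ z : ℂ, ∀ m : ℕ, 1 ≤ m → gammaRes A z ≤ gammaM A m z) ∧
    (∀ z : ℂ, Tendsto (fun m => gammaM A m z) atTop (𝓝 (gammaRes A z))) ∧
    (∀ K : Set ℂ, IsCompact K →
      TendstoUniformlyOn (fun m z => gammaM A m z) (gammaRes A) atTop K) := by
  refine ⟨fun z m hm => gammaM_le_gammaM_of_le hA hm m.le_succ z,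
    fun z m hm => gammaRes_le_gammaM hA hm z, tendsto_gammaM hA, fun K hK => ?_⟩
  -- `γ_0 = 0` spoils monotonicity, so Dini's theorem is applied to `γ_{max m 1}`.
  have hdini := Antitone.tendstoUniformlyOn_of_forall_tendsto hK
    (F := fun m => gammaM A (max m 1)) (fun m => (continuous_gammaM hA _).continuousOn)
    (fun z _ _ _ hkl => gammaM_le_gammaM_of_le hA (le_max_right _ _) (max_le_max_right 1 hkl) z)
    (continuous_gammaRes hA).continuousOn
    (fun z _ => (tendsto_gammaM hA z).comp (tendsto_atTop_mono (le_max_left · 1) tendsto_id))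
  refine hdini.congr ?_
  filter_upwards [eventually_ge_atTop 1] with m hm z _
  rw [max_eq_left hm]

end
end

section
/- There is no sequence of 'general algorithms' deciding whether a 0-1 sequence has infinitely many nonzero entries in one limit. Precisely: let Ω be the set of all sequences a : ℕ → {0,1}, and suppose Γ_n : Ω → {Yes, No} is a sequence of functions such that each Γ_n(a) depends only on finitely many entries of a (with the consistent-domain property: if a and b agree on the entries read for a, then the set of entries read for b equals that for a). Then it is not the case that for every a ∈ Ω, Γ_n(a) converges to the answer to 'does a have infinitely many 1s?' (i.e., eventually equals Yes if a has infinitely many 1s and eventually equals No otherwise). -/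
/-!
A Baire category argument in the Cantor space `ℕ → Bool`. Reading only finitely many entries
makes each `Γ n` locally constant, so for every `k` the set of sequences on which some `Γ n`
with `n ≥ k` answers `No` is open; it contains every finitely supported sequence, hence is dense.
So is the open set of sequences with a `1` beyond position `k`. A sequence in all of these sets
has infinitely many `1`s, yet `Γ n` answers `No` on it for infinitely many `n`.
-/

open Filter Topology

theorem isLocallyConstant_of_depends_on_finset {ι α β : Type*} [TopologicalSpace α]
    [DiscreteTopology α] {f : (ι → α) → β} (Λ : (ι → α) → Finset ι)
    (hf : ∀ a b, (∀ i ∈ Λ a, a i = b i) → f b = f a) : IsLocallyConstant f := by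
  refine (IsLocallyConstant.iff_eventually_eq f).2 fun a => ?_
  have hagree : ∀ᶠ b in 𝓝 a, ∀ i ∈ Λ a, a i = b i := by
    refine (Λ a).eventually_all.2 fun i _ => ?_
    have hi : ∀ᶠ b in 𝓝 a, b i ∈ ({a i} : Set α) := (continuous_apply i).continuousAt.eventually_mem
      ((isOpen_discrete {a i}).mem_nhds (Set.mem_singleton (a i)))
    exact hi.mono fun b hb => (Set.mem_singleton_iff.1 hb).symm
  exact hagree.mono fun b hb => hf a b hb

theorem tendsto_update_atTop {α : Type*} [TopologicalSpace α] (a : ℕ → α) (x : α) :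
    Tendsto (fun N => Function.update a N x) atTop (𝓝 a) :=
  tendsto_pi_nhds.2 fun i => tendsto_const_nhds.congr' <|
    (eventually_gt_atTop i).mono fun _ hN => (Function.update_of_ne hN.ne _ _).symm

theorem dense_setOf_finite_true : Dense {a : ℕ → Bool | {i | a i = true}.Finite} := by
  intro a
  refine mem_closure_of_tendsto (b := atTop) (f := fun N i => decide (i < N) && a i) ?_
    (Eventually.of_forall fun N => (Set.finite_Iio N).subset fun i hi => ?_)
  · exact tendsto_pi_nhds.2 fun i => tendsto_const_nhds.congr' <|
      (eventually_gt_atTop i).mono fun N hN => by simp [hN]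
  · simp_all

theorem isOpen_setOf_exists_ge {X : Type*} [TopologicalSpace X] {p : ℕ → X → Prop}
    (hp : ∀ n, IsOpen {x | p n x}) (m : ℕ) : IsOpen {x | ∃ n ≥ m, p n x} := by
  convert isOpen_biUnion (s := Set.Ici m) fun n _ => hp n using 1
  ext
  simp

theorem dense_setOf_exists_ge_true (m : ℕ) : Dense {a : ℕ → Bool | ∃ i ≥ m, a i = true} :=
  fun a => mem_closure_of_tendsto (tendsto_update_atTop a true)
    ((eventually_ge_atTop m).mono fun N hN => ⟨N, hN, Function.update_self _ _ _⟩)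

theorem stmt_12_general (Γ : ℕ → (ℕ → Bool) → Bool) (Λ : ℕ → (ℕ → Bool) → Finset ℕ)
    (hΓ : ∀ (n : ℕ) (a b : ℕ → Bool), (∀ i ∈ Λ n a, a i = b i) → Γ n b = Γ n a) :
    ¬ ∀ a : ℕ → Bool,
        ({i : ℕ | a i = true}.Infinite → ∀ᶠ n in atTop, Γ n a = true) ∧
        (¬ {i : ℕ | a i = true}.Infinite → ∀ᶠ n in atTop, Γ n a = false) := by
  intro hdecides
  set U : ℕ → Set (ℕ → Bool) := fun k => {a | ∃ n ≥ k, Γ n a = false}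
  set V : ℕ → Set (ℕ → Bool) := fun k => {a | ∃ i ≥ k, a i = true}
  have hU_open (k : ℕ) : IsOpen (U k) := by
    refine isOpen_setOf_exists_ge (fun n => (isOpen_discrete {false}).preimage ?_) k
    exact (isLocallyConstant_of_depends_on_finset (Λ n) (hΓ n)).continuous
  have hV_open (k : ℕ) : IsOpen (V k) :=
    isOpen_setOf_exists_ge (fun i => (isOpen_discrete {true}).preimage (continuous_apply i)) k
  have hU_dense (k : ℕ) : Dense (U k) := dense_setOf_finite_true.mono fun a ha =>
    ((eventually_ge_atTop k).and ((hdecides a).2 (Set.not_infinite.2 ha))).exists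
  obtain ⟨a, ha⟩ := (dense_iInter_of_isOpen_nat (fun k => (hU_open k).inter (hV_open k))
    fun k => (hU_dense k).inter_of_isOpen_left (dense_setOf_exists_ge_true k) (hU_open k)).nonempty
  simp only [Set.mem_iInter] at ha
  have hinf : {i | a i = true}.Infinite :=
    Nat.frequently_atTop_iff_infinite.1 (frequently_atTop.2 fun k => (ha k).2)
  have hfalse : ∃ᶠ n in atTop, Γ n a = false := frequently_atTop.2 fun k => (ha k).1
  exact hfalse (((hdecides a).1 hinf).mono fun n hn => by simp [hn])

/-- No sequence of general algorithms decides in one limit whether a 0-1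
sequence has infinitely many nonzero entries.  Each `Γ n` reads only the finitely many
entries indexed by `Λ n a` (consistency: if `b` agrees with `a` on `Λ n a`, then
`Λ n b = Λ n a` and `Γ n b = Γ n a`).  Then it is not the case that for every `a` the
outputs `Γ n a` converge (i.e. are eventually constant) to the correct answer. -/
theorem stmt_12 (Γ : ℕ → (ℕ → Bool) → Bool) (Λ : ℕ → (ℕ → Bool) → Finset ℕ)
    (hΛ : ∀ (n : ℕ) (a b : ℕ → Bool), (∀ i ∈ Λ n a, a i = b i) → Λ n b = Λ n a)
    (hΓ : ∀ (n : ℕ) (a b : ℕ → Bool), (∀ i ∈ Λ n a, a i = b i) → Γ n b = Γ n a) :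
    ¬ ∀ a : ℕ → Bool,
        ({i : ℕ | a i = true}.Infinite → ∀ᶠ n in atTop, Γ n a = true) ∧
        (¬ {i : ℕ | a i = true}.Infinite → ∀ᶠ n in atTop, Γ n a = false) :=
  stmt_12_general Γ Λ hΓ
end

section
/- Let A and A_n be closed operators on a Hilbert space H, with resolvents R(z) = (A - z)⁻¹ and R_n(z) existing on a compact set K avoiding the spectrum of A, and suppose sup_{z∈K}‖R_n(z) - R(z)‖ → 0. Define γ(z) = 1/‖R(z)‖ and γ_n(z) = 1/‖R_n(z)‖. If the resolvent of A is compact, then γ(z) ≤ dist(z, sp(A)) for all z, and the ε-pseudospectrum satisfies sp_ε(A) = {z : γ(z) ≤ ε} = closure{z : γ(z) < ε}, using that the resolvent norm of an operator with compact resolvent is nowhere locally constant on open sets (Globevnik–Davies–Shargorodsky). -/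
/-!
Off the spectrum the resolvent identity makes `z ↦ R z` holomorphic, and a compact operator on a
Hilbert space attains its norm at some vector `x`. If `‖R‖` had a local maximum at `z₀`, the
maximum modulus principle for the map `z ↦ R z x` into the strictly convex space `H` would make it
locally constant, and then the resolvent identity and injectivity force `R z₀ x = 0`. So
`γ = ‖R‖⁻¹` has no local minimum with a positive value, hence `{γ ≤ ε}` is the closure of
`{γ < ε}`. The bound `γ ≤ dist(·, sp A)` is the Neumann-series estimate; it also makes `γ`
continuous at the spectrum.
-/

open Filter Topology

noncomputable section

open Classical in
/-- `γ(z) = ‖R(z)‖⁻¹` off the spectrum, with the convention `γ = 0` on the spectrum. -/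
def gammaOf {H : Type*} [NormedAddCommGroup H] [InnerProductSpace ℂ H]
    (spA : Set ℂ) (R : ℂ → H →L[ℂ] H) (z : ℂ) : ℝ :=
  if z ∈ spA then 0 else ‖R z‖⁻¹

theorem closure_setOf_lt_eq_setOf_le {X α : Type*} [TopologicalSpace X] [TopologicalSpace α]
    [LinearOrder α] [OrderClosedTopology α] {f : X → α} (hf : Continuous f) {a : α}
    (hmin : ∀ x, f x = a → ¬ IsLocalMin f x) : closure {x | f x < a} = {x | f x ≤ a} := by
  refine (closure_lt_subset_le hf continuous_const).antisymm fun x (hx : f x ≤ a) => ?_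
  rcases hx.lt_or_eq with hlt | rfl
  · exact subset_closure hlt
  · have hfreq : ∃ᶠ y in 𝓝 x, f y < f x := by
      simpa [IsLocalMin, IsMinFilter, Filter.not_eventually] using hmin x rfl
    exact mem_closure_iff_frequently.mpr hfreq

theorem hasDerivAt_of_resolvent_identity {A : Type*} [NormedRing A] [NormedAlgebra ℂ A]
    {U : Set ℂ} (hU : IsOpen U) {R : ℂ → A}
    (hres : ∀ z ∈ U, ∀ w ∈ U, R z - R w = (z - w) • (R z * R w)) (hcont : ContinuousOn R U)
    {w : ℂ} (hw : w ∈ U) : HasDerivAt R (R w * R w) w := by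
  rw [hasDerivAt_iff_tendsto_slope]
  have hslope : ∀ᶠ z in 𝓝[≠] w, R z * R w = slope R w z := by
    filter_upwards [nhdsWithin_le_nhds (hU.mem_nhds hw), self_mem_nhdsWithin] with z hz hzw
    rw [slope_def_module, hres z hz w hw, smul_smul,
      inv_mul_cancel₀ (sub_ne_zero.mpr hzw), one_smul]
  refine Tendsto.congr' hslope (Tendsto.mono_left ?_ nhdsWithin_le_nhds)
  exact ((hcont.continuousAt (hU.mem_nhds hw)).mul continuousAt_const).tendsto

section CompactResolvent

variable {H : Type*} [NormedAddCommGroup H] [InnerProductSpace ℂ H] [CompleteSpace H]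

/- A maximizing vector is an eigenvector of the compact self-adjoint `T† T` for an eigenvalue of
modulus `‖T† T‖ = ‖T‖²`, which exists since the spectral radius of `T† T` is its norm. -/
theorem IsCompactOperator.exists_norm_apply_eq_opNorm {T : H →L[ℂ] H}
    (hT : IsCompactOperator T) :
    ∃ x : H, ‖x‖ ≤ 1 ∧ ‖T x‖ = ‖T‖ := by
  rcases eq_or_ne T 0 with rfl | hT0
  · exact ⟨0, by simp, by simp⟩
  obtain ⟨x₀, hx₀⟩ : ∃ x, T x ≠ 0 := by
    by_contra! h
    exact hT0 (ContinuousLinearMap.ext h)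
  have : Nontrivial H := nontrivial_of_ne x₀ 0 fun h => hx₀ (by simp [h])
  have hS : IsCompactOperator (star T * T) := hT.clm_comp (star T)
  obtain ⟨μ, hμS, hμ⟩ := spectrum.exists_nnnorm_eq_spectralRadius (star T * T)
  rw [(IsSelfAdjoint.star_mul_self T).spectralRadius_eq_nnnorm, ENNReal.coe_inj,
    ← NNReal.coe_inj, coe_nnnorm, coe_nnnorm, CStarRing.norm_star_mul_self] at hμ
  have hμ0 : μ ≠ 0 := by
    rw [← norm_pos_iff, hμ]; exact mul_self_pos.mpr (norm_ne_zero_iff.mpr hT0)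
  obtain ⟨v, hv, hv0⟩ := ((hS.hasEigenvalue_iff_mem_spectrum hμ0).mpr hμS).exists_hasEigenvector
  have hSv : (star T * T) v = μ • v := Module.End.mem_eigenspace_iff.mp hv
  have hTv : ‖T v‖ = ‖T‖ * ‖v‖ := by
    refine (pow_left_inj₀ (norm_nonneg _) (by positivity) two_ne_zero).mp ?_
    calc ‖T v‖ ^ 2 = ‖inner ℂ v ((star T * T) v)‖ := by
          rw [ContinuousLinearMap.star_eq_adjoint, mul_apply_eq_comp,
            ContinuousLinearMap.adjoint_inner_right, inner_self_eq_norm_sq_to_K]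
          simp
      _ = (‖T‖ * ‖v‖) ^ 2 := by
          rw [hSv, inner_smul_right, inner_self_eq_norm_sq_to_K]
          simp [hμ]; ring
  refine ⟨(‖v‖ : ℂ)⁻¹ • v, ?_, ?_⟩
  · simp [norm_smul, hv0]
  · simp only [map_smul, norm_smul, norm_inv, Complex.norm_real, norm_norm, hTv]
    field_simp

theorem not_isLocalMax_norm_resolvent {U : Set ℂ} (hU : IsOpen U) {R : ℂ → H →L[ℂ] H}
    (hres : ∀ z ∈ U, ∀ w ∈ U, R z - R w = (z - w) • (R z * R w)) (hcont : ContinuousOn R U)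
    (hcomp : ∀ z ∈ U, IsCompactOperator (R z)) (hinj : ∀ z ∈ U, Function.Injective (R z))
    {z₀ : ℂ} (hz₀ : z₀ ∈ U) (hR : R z₀ ≠ 0) : ¬ IsLocalMax (fun z => ‖R z‖) z₀ := by
  intro hmax
  obtain ⟨x, hx, hRx⟩ := (hcomp z₀ hz₀).exists_norm_apply_eq_opNorm
  have hdiff : ∀ᶠ z in 𝓝 z₀, DifferentiableAt ℂ (fun z => R z x) z := by
    filter_upwards [hU.mem_nhds hz₀] with z hz
    exact ((hasDerivAt_of_resolvent_identity hU hres hcont hz).differentiableAt).clm_apply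
      (differentiableAt_const x)
  have hmaxx : IsLocalMax (fun z => ‖R z x‖) z₀ := by
    filter_upwards [hmax] with z hz
    calc ‖R z x‖ ≤ ‖R z‖ * ‖x‖ := (R z).le_opNorm x
      _ ≤ ‖R z‖ := mul_le_of_le_one_right (norm_nonneg _) hx
      _ ≤ ‖R z₀ x‖ := hz.trans hRx.ge
  -- maximum modulus for `H`-valued maps needs `H` strictly convex as a real normed space
  let _ := InnerProductSpace.complexToReal (G := H)
  have hconst := Complex.eventually_eq_of_isLocalMax_norm hdiff hmaxx
  obtain ⟨z₁, ⟨hz₁x, hz₁⟩, hz₁₀⟩ :=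
    ((hconst.and (hU.mem_nhds hz₀)).filter_mono nhdsWithin_le_nhds
      |>.and self_mem_nhdsWithin).exists (f := 𝓝[≠] z₀)
  have h : (z₁ - z₀) • R z₁ (R z₀ x) = 0 := by
    rw [← mul_apply_eq_comp, ← smul_apply, ← hres z₁ hz₁ z₀ hz₀, sub_apply, hz₁x, sub_self]
  have hRx0 : R z₀ x = 0 := hinj z₁ hz₁ <| by
    rw [map_zero]
    exact (smul_eq_zero.mp h).resolve_left (sub_ne_zero.mpr hz₁₀)
  rw [hRx0, norm_zero, eq_comm, norm_eq_zero] at hRx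
  exact hR hRx

end CompactResolvent

section gammaOf

variable {H : Type*} [NormedAddCommGroup H] [InnerProductSpace ℂ H] {spA : Set ℂ}
  {R : ℂ → H →L[ℂ] H}

@[simp]
theorem gammaOf_of_mem {z : ℂ} (hz : z ∈ spA) : gammaOf spA R z = 0 := if_pos hz

@[simp]
theorem gammaOf_of_notMem {z : ℂ} (hz : z ∉ spA) : gammaOf spA R z = ‖R z‖⁻¹ := if_neg hz

theorem gammaOf_nonneg (z : ℂ) : 0 ≤ gammaOf spA R z := by
  unfold gammaOf
  split_ifs <;> positivity

theorem resolvent_ne_zero (hne : spA.Nonempty)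
    (hneu : ∀ z ∉ spA, ∀ w : ℂ, ‖w - z‖ * ‖R z‖ < 1 → w ∉ spA) {z : ℂ} (hz : z ∉ spA) :
    R z ≠ 0 := by
  intro h
  obtain ⟨μ, hμ⟩ := hne
  exact hneu z hz μ (by simp [h]) hμ

theorem gammaOf_le_infDist (hne : spA.Nonempty)
    (hneu : ∀ z ∉ spA, ∀ w : ℂ, ‖w - z‖ * ‖R z‖ < 1 → w ∉ spA) (z : ℂ) :
    gammaOf spA R z ≤ Metric.infDist z spA := by
  by_cases hz : z ∈ spA
  · rw [gammaOf_of_mem hz]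
    exact Metric.infDist_nonneg
  rw [gammaOf_of_notMem hz]
  by_contra! hlt
  obtain ⟨w, hw, hdist⟩ := (Metric.infDist_lt_iff hne).mp hlt
  have hR : 0 < ‖R z‖ := norm_pos_iff.mpr (resolvent_ne_zero hne hneu hz)
  refine hneu z hz w ?_ hw
  rw [dist_comm, dist_eq_norm] at hdist
  calc ‖w - z‖ * ‖R z‖ < ‖R z‖⁻¹ * ‖R z‖ := by gcongr
    _ = 1 := inv_mul_cancel₀ hR.ne'

theorem continuous_gammaOf (hclosed : IsClosed spA) (hne : spA.Nonempty)
    (hcont : ContinuousOn R spAᶜ)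
    (hneu : ∀ z ∉ spA, ∀ w : ℂ, ‖w - z‖ * ‖R z‖ < 1 → w ∉ spA) :
    Continuous (gammaOf spA R) := by
  refine continuous_iff_continuousAt.mpr fun z => ?_
  by_cases hz : z ∈ spA
  · have hdist : Tendsto (Metric.infDist · spA) (𝓝 z) (𝓝 0) := by
      simpa [Metric.infDist_zero_of_mem hz] using (Metric.continuous_infDist_pt spA).tendsto z
    rw [ContinuousAt, gammaOf_of_mem hz]
    exact squeeze_zero gammaOf_nonneg (gammaOf_le_infDist hne hneu) hdist
  · have hU : spAᶜ ∈ 𝓝 z := hclosed.isOpen_compl.mem_nhds hz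
    refine ((hcont.continuousAt hU).norm.inv₀
      (norm_ne_zero_iff.mpr (resolvent_ne_zero hne hneu hz))).congr ?_
    filter_upwards [hU] with w hw
    rw [gammaOf_of_notMem hw, Pi.inv_apply]

theorem setOf_gammaOf_lt (hne : spA.Nonempty)
    (hneu : ∀ z ∉ spA, ∀ w : ℂ, ‖w - z‖ * ‖R z‖ < 1 → w ∉ spA) {ε : ℝ} (hε : 0 < ε) :
    {z | gammaOf spA R z < ε} = spA ∪ {z | z ∉ spA ∧ 1 / ε < ‖R z‖} := by
  ext z
  by_cases hz : z ∈ spA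
  · simp [hz, hε]
  · have hR : 0 < ‖R z‖ := norm_pos_iff.mpr (resolvent_ne_zero hne hneu hz)
    simp [hz, inv_lt_comm₀ hR hε]

theorem not_isLocalMin_gammaOf [CompleteSpace H] (hclosed : IsClosed spA) (hne : spA.Nonempty)
    (hres : ∀ z ∉ spA, ∀ w ∉ spA, R z - R w = (z - w) • (R z * R w))
    (hcont : ContinuousOn R spAᶜ)
    (hcomp : ∀ z ∉ spA, IsCompactOperator ⇑(R z))
    (hinj : ∀ z ∉ spA, Function.Injective ⇑(R z))
    (hneu : ∀ z ∉ spA, ∀ w : ℂ, ‖w - z‖ * ‖R z‖ < 1 → w ∉ spA)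
    {z : ℂ} (hz : 0 < gammaOf spA R z) : ¬ IsLocalMin (gammaOf spA R) z := by
  intro hmin
  have hzsp : z ∉ spA := fun h => hz.ne' (gammaOf_of_mem h)
  refine not_isLocalMax_norm_resolvent hclosed.isOpen_compl hres hcont hcomp hinj hzsp
    (resolvent_ne_zero hne hneu hzsp) ?_
  filter_upwards [hmin] with w hw
  have hwsp : w ∉ spA := fun h => (hz.trans_le hw).ne' (gammaOf_of_mem h)
  rw [gammaOf_of_notMem hzsp] at hz hw
  rw [gammaOf_of_notMem hwsp] at hw
  exact (inv_le_inv₀ (inv_pos.mp hz) (inv_pos.mp (hz.trans_le hw))).mp hw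

end gammaOf

theorem stmt_18_general {H : Type*} [NormedAddCommGroup H] [InnerProductSpace ℂ H] [CompleteSpace H]
    (spA : Set ℂ) (hclosed : IsClosed spA) (hne : spA.Nonempty)
    (R : ℂ → H →L[ℂ] H)
    (hres : ∀ z ∉ spA, ∀ w ∉ spA, R z - R w = (z - w) • (R z * R w))
    (hcont : ContinuousOn R spAᶜ)
    (hcomp : ∀ z ∉ spA, IsCompactOperator ⇑(R z))
    (hinj : ∀ z ∉ spA, Function.Injective ⇑(R z))
    (hneu : ∀ z ∉ spA, ∀ w : ℂ, ‖w - z‖ * ‖R z‖ < 1 → w ∉ spA) :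
    (∀ z : ℂ, gammaOf spA R z ≤ Metric.infDist z spA) ∧
    (∀ ε : ℝ, 0 < ε →
      closure (spA ∪ {z : ℂ | z ∉ spA ∧ 1 / ε < ‖R z‖}) = {z : ℂ | gammaOf spA R z ≤ ε} ∧
      {z : ℂ | gammaOf spA R z ≤ ε} = closure {z : ℂ | gammaOf spA R z < ε}) := by
  refine ⟨gammaOf_le_infDist hne hneu, fun ε hε => ?_⟩
  have hclosure : closure {z | gammaOf spA R z < ε} = {z | gammaOf spA R z ≤ ε} :=
    closure_setOf_lt_eq_setOf_le (continuous_gammaOf hclosed hne hcont hneu) fun z hz =>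
      not_isLocalMin_gammaOf hclosed hne hres hcont hcomp hinj hneu (hz ▸ hε)
  rw [← setOf_gammaOf_lt hne hneu hε, hclosure]
  exact ⟨rfl, rfl⟩

/-- The closed densely defined operator `A` with compact resolvent is
encoded by its spectrum `spA` and its resolvent `R(z) = (A - z)⁻¹`, defined off `spA`,
satisfying the first resolvent identity, compactness, injectivity, the Neumann-series
bound (points `w` with `|w - z|·‖R(z)‖ < 1` lie in the resolvent set), and blow-up of
`‖R‖` near the spectrum; `A_n` are approximations whose resolvents `R_n` converge to `R`
uniformly on a compact set `K` avoiding `spA`.  Then `γ(z) ≤ dist(z, sp(A))` for all `z`,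
and for every `ε > 0` the pseudospectrum
`sp_ε(A) = closure {z : ‖(A - z)⁻¹‖ > 1/ε}` equals `{z : γ(z) ≤ ε}`, which in turn equals
`closure {z : γ(z) < ε}` (Globevnik–Davies–Shargorodsky: the resolvent norm is nowhere
locally constant). -/
theorem stmt_18 {H : Type*} [NormedAddCommGroup H] [InnerProductSpace ℂ H] [CompleteSpace H]
    (spA : Set ℂ) (hclosed : IsClosed spA) (hne : spA.Nonempty)
    (R : ℂ → H →L[ℂ] H)
    (hres : ∀ z ∉ spA, ∀ w ∉ spA, R z - R w = (z - w) • (R z * R w))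
    (hcont : ContinuousOn R spAᶜ)
    (hcomp : ∀ z ∉ spA, IsCompactOperator ⇑(R z))
    (hinj : ∀ z ∉ spA, Function.Injective ⇑(R z))
    (hneu : ∀ z ∉ spA, ∀ w : ℂ, ‖w - z‖ * ‖R z‖ < 1 → w ∉ spA)
    (hblow : ∀ μ ∈ spA, ∀ M : ℝ, ∀ δ : ℝ, 0 < δ →
      ∃ z ∉ spA, dist z μ < δ ∧ M < ‖R z‖)
    (Rn : ℕ → ℂ → H →L[ℂ] H) (K : Set ℂ) (hK : IsCompact K) (hKsp : Disjoint K spA)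
    (hconv : TendstoUniformlyOn (fun n z => Rn n z) R atTop K) :
    (∀ z : ℂ, gammaOf spA R z ≤ Metric.infDist z spA) ∧
    (∀ ε : ℝ, 0 < ε →
      closure (spA ∪ {z : ℂ | z ∉ spA ∧ 1 / ε < ‖R z‖}) = {z : ℂ | gammaOf spA R z ≤ ε} ∧
      {z : ℂ | gammaOf spA R z ≤ ε} = closure {z : ℂ | gammaOf spA R z < ε}) :=
  stmt_18_general spA hclosed hne R hres hcont hcomp hinj hneu

end
end
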